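/- arXiv:2307.15313 — 6 statements merged into one kernel-verified Lean document; each statement's English description precedes it below -/
import Mathlib

section
/- (Theorem 1(iii), changes-in-changes with group heterogeneity, single-index case.) Assume in addition that there exist a function γ : ℝ → ℝ → ℝ that is strictly increasing in each of its two arguments separately and a function H : ℝ → {0,1} → ℝ with H(·,t) strictly increasing for each t ∈ {0,1}, such that h(u, v, t) = H(γ(u, v), t) for all u, v ∈ ℝ and t ∈ {0,1}; assume both range inclusions Q_{U_I} '' [0,1] ⊆ Q_{U_N} '' [0,1] and Q_{V_I} '' [0,1] ⊆ Q_{V_N} '' [0,1]. Then for every (τ_U*, τ_V*) ∈ [0,1]², the set S := {(τ_U', τ_V') ∈ [0,1]² : Q_{Y_{N0}(τ_U')}(τ_V') = Q_{Y_{I0}(τ_U*)}(τ_V*)} is nonempty, and for every (τ_U', τ_V') ∈ S one has Y^N_{I1}(τ_U*, τ_V*) = Q_{Y_{N1}(τ_U')}(τ_V'). -/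
/- Theorem 1(iii) (changes-in-changes with group heterogeneity, single-index
case).  Time periods are encoded by `Bool` (`false` = period 0,
`true` = period 1). -/
theorem cic_theorem_one_part_iii
    (h : ℝ → ℝ → Bool → ℝ)
    (hmono_u : ∀ t v, StrictMono fun u => h u v t)
    (hmono_v : ∀ t u, StrictMono fun v => h u v t)
    (QUI QUN QVI QVN : ℝ → ℝ)
    (hQUI_mono : StrictMonoOn QUI (Set.Icc 0 1))
    (hQUI_cont : ContinuousOn QUI (Set.Icc 0 1))
    (hQUN_mono : StrictMonoOn QUN (Set.Icc 0 1))
    (hQUN_cont : ContinuousOn QUN (Set.Icc 0 1))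
    (hQVI_mono : StrictMonoOn QVI (Set.Icc 0 1))
    (hQVI_cont : ContinuousOn QVI (Set.Icc 0 1))
    (hQVN_mono : StrictMonoOn QVN (Set.Icc 0 1))
    (hQVN_cont : ContinuousOn QVN (Set.Icc 0 1))
    (γ : ℝ → ℝ → ℝ) (H : ℝ → Bool → ℝ)
    (hγ_mono_u : ∀ v, StrictMono fun u => γ u v)
    (hγ_mono_v : ∀ u, StrictMono fun v => γ u v)
    (hH_mono : ∀ t, StrictMono fun x => H x t)
    (h_index : ∀ u v t, h u v t = H (γ u v) t)
    (hU_supp : QUI '' Set.Icc 0 1 ⊆ QUN '' Set.Icc 0 1)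
    (hV_supp : QVI '' Set.Icc 0 1 ⊆ QVN '' Set.Icc 0 1) :
    ∀ τUstar ∈ Set.Icc (0:ℝ) 1, ∀ τVstar ∈ Set.Icc (0:ℝ) 1,
      {p : ℝ × ℝ | p.1 ∈ Set.Icc (0:ℝ) 1 ∧ p.2 ∈ Set.Icc (0:ℝ) 1 ∧
          h (QUN p.1) (QVN p.2) false = h (QUI τUstar) (QVI τVstar) false}.Nonempty ∧
      ∀ τU' ∈ Set.Icc (0:ℝ) 1, ∀ τV' ∈ Set.Icc (0:ℝ) 1,
        h (QUN τU') (QVN τV') false = h (QUI τUstar) (QVI τVstar) false →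
        h (QUI τUstar) (QVI τVstar) true = h (QUN τU') (QVN τV') true := by
  intro τUstar hτU τVstar hτV
  constructor
  · obtain ⟨a, ha, hQa⟩ := hU_supp ⟨τUstar, hτU, rfl⟩
    obtain ⟨b, hb, hQb⟩ := hV_supp ⟨τVstar, hτV, rfl⟩
    exact ⟨(a, b), ha, hb, by simp [hQa, hQb]⟩
  · intro τU' _ τV' _ heq
    rw [h_index, h_index] at heq ⊢
    have := (hH_mono false).injective heq
    rw [this]
end

section
/- (Theorem 2(i), testable implication for identical individual-level distributions.) Assume both range inclusions Q_{U_I} '' [0,1] ⊆ Q_{U_N} '' [0,1] and Q_{V_I} '' [0,1] ⊆ Q_{V_N} '' [0,1]. Then Q_{U_I}(τ) = Q_{U_N}(τ) for all τ ∈ [0,1] if and only if for every τ_V ∈ [0,1] there exists τ_V' ∈ [0,1], not depending on τ_U, such that Q_{Y_{N0}(τ_U)}(τ_V') = Q_{Y_{I0}(τ_U)}(τ_V) for every τ_U ∈ [0,1] (equivalently, the quantity F_{Y_{N0}(τ_U)}(Q_{Y_{I0}(τ_U)}(τ_V)) depends only on τ_V and not on τ_U). -/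
/- Theorem 2(i) (testable implication for identical individual-level
distributions).  Time periods are encoded by `Bool` (`false` = period 0,
`true` = period 1).  The condition `Q_{U_I} = Q_{U_N}` on `[0,1]` holds iff
for every `τ_V` there is a matched quantile level `τ_V'`, not depending on
`τ_U`, with `Q_{Y_{N0}(τ_U)}(τ_V') = Q_{Y_{I0}(τ_U)}(τ_V)` for every `τ_U`. -/
theorem cic_theorem_two_part_i
    (h : ℝ → ℝ → Bool → ℝ)
    (hmono_u : ∀ t v, StrictMono fun u => h u v t)
    (hmono_v : ∀ t u, StrictMono fun v => h u v t)
    (QUI QUN QVI QVN : ℝ → ℝ)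
    (hQUI_mono : StrictMonoOn QUI (Set.Icc 0 1))
    (hQUI_cont : ContinuousOn QUI (Set.Icc 0 1))
    (hQUN_mono : StrictMonoOn QUN (Set.Icc 0 1))
    (hQUN_cont : ContinuousOn QUN (Set.Icc 0 1))
    (hQVI_mono : StrictMonoOn QVI (Set.Icc 0 1))
    (hQVI_cont : ContinuousOn QVI (Set.Icc 0 1))
    (hQVN_mono : StrictMonoOn QVN (Set.Icc 0 1))
    (hQVN_cont : ContinuousOn QVN (Set.Icc 0 1))
    (hU_supp : QUI '' Set.Icc 0 1 ⊆ QUN '' Set.Icc 0 1)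
    (hV_supp : QVI '' Set.Icc 0 1 ⊆ QVN '' Set.Icc 0 1) :
    (∀ τ ∈ Set.Icc (0:ℝ) 1, QUI τ = QUN τ) ↔
      (∀ τV ∈ Set.Icc (0:ℝ) 1, ∃ τV' ∈ Set.Icc (0:ℝ) 1,
        ∀ τU ∈ Set.Icc (0:ℝ) 1,
          h (QUN τU) (QVN τV') false = h (QUI τU) (QVI τV) false) := by
  constructor
  · intro hEq τV hτV
    obtain ⟨τV', hτV', hVeq⟩ := hV_supp ⟨τV, hτV, rfl⟩
    exact ⟨τV', hτV', fun τU hτU => by rw [hVeq, hEq τU hτU]⟩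
  · intro hcond τ hτ
    obtain ⟨τV', hτV', heq⟩ := hcond 0 (Set.left_mem_Icc.mpr zero_le_one)
    set a := QVN τV' with ha
    set b := QVI 0 with hb
    -- heq : ∀ τU ∈ Icc 0 1, h (QUN τU) a false = h (QUI τU) b false
    rcases lt_trichotomy (QUI τ) (QUN τ) with hlt | heqc | hgt
    · exfalso
      -- derive a < b
      have h1 := heq τ hτ
      have hab : a < b := by
        by_contra hba
        push_neg at hba
        have : h (QUI τ) b false ≤ h (QUI τ) a false :=
          (hmono_v false (QUI τ)).monotone hba
        have h2 : h (QUI τ) a false < h (QUN τ) a false := hmono_u false a hlt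
        linarith [h1, this, h2]
      -- then QUI s < QUN s for all s ∈ [0,1]
      have hall : ∀ s ∈ Set.Icc (0:ℝ) 1, QUI s < QUN s := by
        intro s hs
        have h2 : h (QUI s) a false < h (QUI s) b false := hmono_v false (QUI s) hab
        have h3 : h (QUI s) a false < h (QUN s) a false := by
          rw [heq s hs]; exact h2
        exact (hmono_u false a).lt_iff_lt.mp h3
      -- contradiction at s = 0 using U support
      have h0 : (0:ℝ) ∈ Set.Icc (0:ℝ) 1 := Set.left_mem_Icc.mpr zero_le_one
      obtain ⟨σ, hσ, hσeq⟩ := hU_supp ⟨0, h0, rfl⟩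
      have : QUN 0 ≤ QUN σ := hQUN_mono.monotoneOn h0 hσ hσ.1
      have := hall 0 h0
      linarith [hσeq ▸ this]
    · exact heqc
    · exfalso
      have h1 := heq τ hτ
      have hab : b < a := by
        by_contra hba
        push_neg at hba
        have h2 : h (QUN τ) a false ≤ h (QUN τ) b false :=
          (hmono_v false (QUN τ)).monotone hba
        have h3 : h (QUN τ) b false < h (QUI τ) b false := hmono_u false b hgt
        linarith [h1, h2, h3]
      have hall : ∀ s ∈ Set.Icc (0:ℝ) 1, QUN s < QUI s := by
        intro s hs
        have h2 : h (QUI s) b false < h (QUI s) a false := hmono_v false (QUI s) hab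
        have h3 : h (QUN s) a false < h (QUI s) a false := by
          rw [heq s hs]; exact h2
        exact (hmono_u false a).lt_iff_lt.mp h3
      have h1m : (1:ℝ) ∈ Set.Icc (0:ℝ) 1 := Set.right_mem_Icc.mpr zero_le_one
      obtain ⟨σ, hσ, hσeq⟩ := hU_supp ⟨1, h1m, rfl⟩
      have : QUN σ ≤ QUN 1 := hQUN_mono.monotoneOn hσ h1m hσ.2
      have := hall 1 h1m
      linarith [hσeq ▸ this]
end

section
/- (Theorem 2(ii), testable implication for identical group-level distributions.) Assume both range inclusions Q_{U_I} '' [0,1] ⊆ Q_{U_N} '' [0,1] and Q_{V_I} '' [0,1] ⊆ Q_{V_N} '' [0,1]. Then Q_{V_I}(τ) = Q_{V_N}(τ) for all τ ∈ [0,1] if and only if for every τ_U ∈ [0,1] there exists τ_U' ∈ [0,1], not depending on τ_V, such that Q_{Y_{N0}(τ_U')}(τ_V) = Q_{Y_{I0}(τ_U)}(τ_V) for every τ_V ∈ [0,1]. -/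
/- Theorem 2(ii) (testable implication for identical group-level
distributions).  Time periods are encoded by `Bool` (`false` = period 0,
`true` = period 1). -/
theorem cic_theorem_two_part_ii
    (h : ℝ → ℝ → Bool → ℝ)
    (hmono_u : ∀ t v, StrictMono fun u => h u v t)
    (hmono_v : ∀ t u, StrictMono fun v => h u v t)
    (QUI QUN QVI QVN : ℝ → ℝ)
    (hQUI_mono : StrictMonoOn QUI (Set.Icc 0 1))
    (hQUI_cont : ContinuousOn QUI (Set.Icc 0 1))
    (hQUN_mono : StrictMonoOn QUN (Set.Icc 0 1))
    (hQUN_cont : ContinuousOn QUN (Set.Icc 0 1))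
    (hQVI_mono : StrictMonoOn QVI (Set.Icc 0 1))
    (hQVI_cont : ContinuousOn QVI (Set.Icc 0 1))
    (hQVN_mono : StrictMonoOn QVN (Set.Icc 0 1))
    (hQVN_cont : ContinuousOn QVN (Set.Icc 0 1))
    (hU_supp : QUI '' Set.Icc 0 1 ⊆ QUN '' Set.Icc 0 1)
    (hV_supp : QVI '' Set.Icc 0 1 ⊆ QVN '' Set.Icc 0 1) :
    (∀ τ ∈ Set.Icc (0:ℝ) 1, QVI τ = QVN τ) ↔
      (∀ τU ∈ Set.Icc (0:ℝ) 1, ∃ τU' ∈ Set.Icc (0:ℝ) 1,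
        ∀ τV ∈ Set.Icc (0:ℝ) 1,
          h (QUN τU') (QVN τV) false = h (QUI τU) (QVI τV) false) := by
  have h01 : (0:ℝ) ∈ Set.Icc (0:ℝ) 1 := ⟨le_refl 0, zero_le_one⟩
  have h11 : (1:ℝ) ∈ Set.Icc (0:ℝ) 1 := ⟨zero_le_one, le_refl 1⟩
  constructor
  · intro heq τU hτU
    obtain ⟨τU', hτU', hval⟩ := hU_supp ⟨τU, hτU, rfl⟩
    exact ⟨τU', hτU', fun τV hτV => by rw [hval, heq τV hτV]⟩
  · intro H τ hτ
    obtain ⟨τU', hτU', hval⟩ := H 0 h01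
    have key : QUN τU' = QUI 0 := by
      rcases lt_trichotomy (QUN τU') (QUI 0) with hlt | heq | hgt
      · exfalso
        have hall : ∀ τV ∈ Set.Icc (0:ℝ) 1, QVI τV < QVN τV := by
          intro τV hτV
          have h1 : h (QUN τU') (QVN τV) false < h (QUI 0) (QVN τV) false :=
            hmono_u false (QVN τV) hlt
          rw [hval τV hτV] at h1
          exact (hmono_v false (QUI 0)).lt_iff_lt.mp h1
        obtain ⟨s, hs, hsval⟩ := hV_supp ⟨0, h01, rfl⟩
        have hge : QVN 0 ≤ QVN s := (hQVN_mono.monotoneOn) h01 hs hs.1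
        rw [hsval] at hge
        exact absurd (hall 0 h01) (not_lt.mpr hge)
      · exact heq
      · exfalso
        have hall : ∀ τV ∈ Set.Icc (0:ℝ) 1, QVN τV < QVI τV := by
          intro τV hτV
          have h1 : h (QUI 0) (QVN τV) false < h (QUN τU') (QVN τV) false :=
            hmono_u false (QVN τV) hgt
          rw [hval τV hτV] at h1
          exact (hmono_v false (QUI 0)).lt_iff_lt.mp h1
        obtain ⟨s, hs, hsval⟩ := hV_supp ⟨1, h11, rfl⟩
        have hle : QVN s ≤ QVN 1 := (hQVN_mono.monotoneOn) hs h11 hs.2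
        rw [hsval] at hle
        exact absurd (hall 1 h11) (not_lt.mpr hle)
    have := hval τ hτ
    rw [key] at this
    exact ((hmono_v false (QUI 0)).injective this).symm
end

section
/- (Theorem 2(iii), forward direction.) Assume both range inclusions Q_{U_I} '' [0,1] ⊆ Q_{U_N} '' [0,1] and Q_{V_I} '' [0,1] ⊆ Q_{V_N} '' [0,1]. Suppose that for all (τ_U, τ_V) ∈ [0,1]² and (τ_U', τ_V') ∈ [0,1]², the equality Q_{Y_{N0}(τ_U)}(τ_V) = Q_{Y_{N0}(τ_U')}(τ_V') implies Q_{Y_{N1}(τ_U)}(τ_V) = Q_{Y_{N1}(τ_U')}(τ_V'). Then for every (τ_U*, τ_V*) ∈ [0,1]², the set S := {(τ_U', τ_V') ∈ [0,1]² : Q_{Y_{N0}(τ_U')}(τ_V') = Q_{Y_{I0}(τ_U*)}(τ_V*)} is nonempty, and every (τ_U', τ_V') ∈ S satisfies Y^N_{I1}(τ_U*, τ_V*) = Q_{Y_{N1}(τ_U')}(τ_V'). -/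
/- Theorem 2(iii), forward direction.  Time periods are encoded by `Bool`
(`false` = period 0, `true` = period 1). -/
theorem cic_theorem_two_part_iii_forward
    (h : ℝ → ℝ → Bool → ℝ)
    (hmono_u : ∀ t v, StrictMono fun u => h u v t)
    (hmono_v : ∀ t u, StrictMono fun v => h u v t)
    (QUI QUN QVI QVN : ℝ → ℝ)
    (hQUI_mono : StrictMonoOn QUI (Set.Icc 0 1))
    (hQUI_cont : ContinuousOn QUI (Set.Icc 0 1))
    (hQUN_mono : StrictMonoOn QUN (Set.Icc 0 1))
    (hQUN_cont : ContinuousOn QUN (Set.Icc 0 1))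
    (hQVI_mono : StrictMonoOn QVI (Set.Icc 0 1))
    (hQVI_cont : ContinuousOn QVI (Set.Icc 0 1))
    (hQVN_mono : StrictMonoOn QVN (Set.Icc 0 1))
    (hQVN_cont : ContinuousOn QVN (Set.Icc 0 1))
    (hU_supp : QUI '' Set.Icc 0 1 ⊆ QUN '' Set.Icc 0 1)
    (hV_supp : QVI '' Set.Icc 0 1 ⊆ QVN '' Set.Icc 0 1)
    (hcond : ∀ τU ∈ Set.Icc (0:ℝ) 1, ∀ τV ∈ Set.Icc (0:ℝ) 1,
      ∀ τU' ∈ Set.Icc (0:ℝ) 1, ∀ τV' ∈ Set.Icc (0:ℝ) 1,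
        h (QUN τU) (QVN τV) false = h (QUN τU') (QVN τV') false →
        h (QUN τU) (QVN τV) true = h (QUN τU') (QVN τV') true) :
    ∀ τUstar ∈ Set.Icc (0:ℝ) 1, ∀ τVstar ∈ Set.Icc (0:ℝ) 1,
      {p : ℝ × ℝ | p.1 ∈ Set.Icc (0:ℝ) 1 ∧ p.2 ∈ Set.Icc (0:ℝ) 1 ∧
          h (QUN p.1) (QVN p.2) false = h (QUI τUstar) (QVI τVstar) false}.Nonempty ∧
      ∀ τU' ∈ Set.Icc (0:ℝ) 1, ∀ τV' ∈ Set.Icc (0:ℝ) 1,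
        h (QUN τU') (QVN τV') false = h (QUI τUstar) (QVI τVstar) false →
        h (QUI τUstar) (QVI τVstar) true = h (QUN τU') (QVN τV') true := by
  intro τUstar hUs τVstar hVs
  obtain ⟨τa, hτa, ha⟩ := hU_supp ⟨τUstar, hUs, rfl⟩
  obtain ⟨τb, hτb, hb⟩ := hV_supp ⟨τVstar, hVs, rfl⟩
  refine ⟨⟨(τa, τb), hτa, hτb, by rw [ha, hb]⟩, ?_⟩
  intro τU' hU' τV' hV' heq
  rw [← ha, ← hb] at heq ⊢
  exact (hcond τU' hU' τV' hV' τa hτa τb hτb heq).symm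
end

section
/- (Theorem 2(iii), converse direction under equal supports.) Assume the strengthened support conditions Q_{U_I} '' [0,1] = Q_{U_N} '' [0,1] and Q_{V_I} '' [0,1] = Q_{V_N} '' [0,1]. Suppose that for every (τ_U*, τ_V*) ∈ [0,1]² and every (τ_U', τ_V') ∈ [0,1]², the equality Q_{Y_{N0}(τ_U')}(τ_V') = Q_{Y_{I0}(τ_U*)}(τ_V*) implies Q_{Y_{N1}(τ_U')}(τ_V') = Y^N_{I1}(τ_U*, τ_V*). Then for all (τ_U, τ_V) ∈ [0,1]² and (τ_U', τ_V') ∈ [0,1]², the equality Q_{Y_{N0}(τ_U)}(τ_V) = Q_{Y_{N0}(τ_U')}(τ_V') implies Q_{Y_{N1}(τ_U)}(τ_V) = Q_{Y_{N1}(τ_U')}(τ_V'). -/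
/- Theorem 2(iii), converse direction under equal supports.  Time periods
are encoded by `Bool` (`false` = period 0, `true` = period 1). -/
theorem cic_theorem_two_part_iii_converse
    (h : ℝ → ℝ → Bool → ℝ)
    (hmono_u : ∀ t v, StrictMono fun u => h u v t)
    (hmono_v : ∀ t u, StrictMono fun v => h u v t)
    (QUI QUN QVI QVN : ℝ → ℝ)
    (hQUI_mono : StrictMonoOn QUI (Set.Icc 0 1))
    (hQUI_cont : ContinuousOn QUI (Set.Icc 0 1))
    (hQUN_mono : StrictMonoOn QUN (Set.Icc 0 1))
    (hQUN_cont : ContinuousOn QUN (Set.Icc 0 1))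
    (hQVI_mono : StrictMonoOn QVI (Set.Icc 0 1))
    (hQVI_cont : ContinuousOn QVI (Set.Icc 0 1))
    (hQVN_mono : StrictMonoOn QVN (Set.Icc 0 1))
    (hQVN_cont : ContinuousOn QVN (Set.Icc 0 1))
    (hU_supp : QUI '' Set.Icc 0 1 = QUN '' Set.Icc 0 1)
    (hV_supp : QVI '' Set.Icc 0 1 = QVN '' Set.Icc 0 1)
    (hid : ∀ τUstar ∈ Set.Icc (0:ℝ) 1, ∀ τVstar ∈ Set.Icc (0:ℝ) 1,
      ∀ τU' ∈ Set.Icc (0:ℝ) 1, ∀ τV' ∈ Set.Icc (0:ℝ) 1,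
        h (QUN τU') (QVN τV') false = h (QUI τUstar) (QVI τVstar) false →
        h (QUN τU') (QVN τV') true = h (QUI τUstar) (QVI τVstar) true) :
    ∀ τU ∈ Set.Icc (0:ℝ) 1, ∀ τV ∈ Set.Icc (0:ℝ) 1,
      ∀ τU' ∈ Set.Icc (0:ℝ) 1, ∀ τV' ∈ Set.Icc (0:ℝ) 1,
        h (QUN τU) (QVN τV) false = h (QUN τU') (QVN τV') false →
        h (QUN τU) (QVN τV) true = h (QUN τU') (QVN τV') true := by
  intro τU hτU τV hτV τU' hτU' τV' hτV' heq0
  have hu : QUN τU ∈ QUI '' Set.Icc 0 1 := hU_supp ▸ Set.mem_image_of_mem _ hτU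
  have hv : QVN τV ∈ QVI '' Set.Icc 0 1 := hV_supp ▸ Set.mem_image_of_mem _ hτV
  obtain ⟨τUs, hτUs, hQU⟩ := hu
  obtain ⟨τVs, hτVs, hQV⟩ := hv
  have h1 := hid τUs hτUs τVs hτVs τU hτU τV hτV (by rw [hQU, hQV])
  have h2 := hid τUs hτUs τVs hτVs τU' hτU' τV' hτV' (by rw [hQU, hQV, ← heq0])
  rw [h1, h2]
end

section
/- (Probabilistic version of Theorem 1(i).) Let (Ω, ℱ, P) be a probability space and let V_I, V_N : Ω → ℝ be random variables such that the cumulative distribution function F_{V_N}(x) := P(V_N ≤ x) is continuous and strictly increasing on all of ℝ. Let h : ℝ → ℝ → {0,1} → ℝ be such that for each t ∈ {0,1}, h(·,·,t) is strictly increasing in each of its first two arguments separately and continuous in its second argument, and let Q_U : (0,1) → ℝ be a given function (the common quantile function of the individual-level unobservable). Define the random group-level quantiles Y_{I0}(τ_U) := h(Q_U(τ_U), V_I, 0), Y_{Nt}(τ_U) := h(Q_U(τ_U), V_N, t) for t = 0,1, and the counterfactual Y^N_{I1}(τ_U) := h(Q_U(τ_U), V_I, 1). For a real random variable Z let Q_Z(τ)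 := sInf { x ∈ ℝ : τ ≤ P(Z ≤ x) } and F_Z(y) := P(Z ≤ y). Then for every τ_U*, τ_V* ∈ (0,1) and every τ_U ∈ (0,1): Q_{Y^N_{I1}(τ_U*)}(τ_V*) = Q_{Y_{N1}(τ_U*)}( F_{Y_{N0}(τ_U)}( Q_{Y_{I0}(τ_U)}(τ_V*) ) ). -/
open MeasureTheory

/-!
Each side equals `h (Q_U τ_U*) (Q_{V_I} τ_V*) 1`. Quantiles commute with continuous strictly
increasing transforms and distribution functions are invariant under them, so the right-hand
side becomes `h (Q_U τ_U*) (Q_{V_N} (F_{V_N} (Q_{V_I} τ_V*))) 1`; since `F_{V_N}` is strictly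
increasing, `Q_{V_N} ∘ F_{V_N}` is the identity.
-/

/-- The quantile function of a real random variable `Z` under `P`:
`Q_Z(τ) = sInf {x | τ ≤ P(Z ≤ x)}`. -/
noncomputable def quantileFun {Ω : Type*} [MeasurableSpace Ω]
    (P : Measure Ω) (Z : Ω → ℝ) (τ : ℝ) : ℝ :=
  sInf {x : ℝ | τ ≤ (P {ω | Z ω ≤ x}).toReal}

/-- The cumulative distribution function of a real random variable `Z`
under `P`: `F_Z(y) = P(Z ≤ y)`. -/
noncomputable def cdfFun {Ω : Type*} [MeasurableSpace Ω]
    (P : Measure Ω) (Z : Ω → ℝ) (y : ℝ) : ℝ :=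
  (P {ω | Z ω ≤ y}).toReal

open ProbabilityTheory Filter Topology

namespace ProbabilisticCiC

variable {Ω : Type*} [MeasurableSpace Ω] (P : Measure Ω)

lemma quantileFun_eq_sInf (Z : Ω → ℝ) (τ : ℝ) :
    quantileFun P Z τ = sInf {x | τ ≤ cdfFun P Z x} := rfl

lemma cdfFun_mem_Ioo_of_strictMono [IsProbabilityMeasure P] {Z : Ω → ℝ}
    (hF : StrictMono (cdfFun P Z)) (y : ℝ) : cdfFun P Z y ∈ Set.Ioo 0 1 :=
  ⟨ENNReal.toReal_nonneg.trans_lt (hF (sub_one_lt y)),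
    (hF (lt_add_one y)).trans_le measureReal_le_one⟩

lemma cdfFun_comp_of_strictMono (Z : Ω → ℝ) {g : ℝ → ℝ} (hg : StrictMono g) (y : ℝ) :
    cdfFun P (fun ω ↦ g (Z ω)) (g y) = cdfFun P Z y := by
  simp only [cdfFun, hg.le_iff_le]

lemma quantileFun_cdfFun_of_strictMono {Z : Ω → ℝ} (hF : StrictMono (cdfFun P Z)) (y : ℝ) :
    quantileFun P Z (cdfFun P Z y) = y := by
  simp only [quantileFun_eq_sInf, hF.le_iff_le]
  exact csInf_Ici

variable [IsProbabilityMeasure P] {Z : Ω → ℝ} {τ : ℝ}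

lemma cdfFun_eq_cdf_map (hZ : Measurable Z) (x : ℝ) : cdfFun P Z x = cdf (P.map Z) x := by
  have := Measure.isProbabilityMeasure_map (μ := P) hZ.aemeasurable
  rw [cdf_eq_real, measureReal_def, Measure.map_apply hZ measurableSet_Iic]
  rfl

lemma nonempty_quantile_set (hZ : Measurable Z) (hτ : τ < 1) :
    {x | τ ≤ cdfFun P Z x}.Nonempty := by
  obtain ⟨x, hx⟩ := ((tendsto_cdf_atTop (P.map Z)).eventually (eventually_ge_nhds hτ)).exists
  exact ⟨x, by rwa [Set.mem_ofPred_eq, cdfFun_eq_cdf_map P hZ]⟩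

lemma bddBelow_quantile_set (hZ : Measurable Z) (hτ : 0 < τ) :
    BddBelow {x | τ ≤ cdfFun P Z x} := by
  obtain ⟨x, hx⟩ := ((tendsto_cdf_atBot (P.map Z)).eventually (eventually_lt_nhds hτ)).exists
  refine ⟨x, fun y hy ↦ le_of_not_gt fun hyx ↦ ?_⟩
  rw [Set.mem_ofPred_eq, cdfFun_eq_cdf_map P hZ] at hy
  exact (hy.trans (monotone_cdf _ hyx.le)).not_gt hx

lemma quantileFun_comp_of_strictMono (hZ : Measurable Z) {g : ℝ → ℝ} (hg : StrictMono g)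
    (hgc : Continuous g) (hτ : τ ∈ Set.Ioo 0 1) :
    quantileFun P (fun ω ↦ g (Z ω)) τ = g (quantileFun P Z τ) := by
  have hne := nonempty_quantile_set P hZ hτ.2
  have hbdd := bddBelow_quantile_set P hZ hτ.1
  rw [quantileFun_eq_sInf, quantileFun_eq_sInf]
  set A := {x | τ ≤ cdfFun P Z x}
  apply le_antisymm
  · have himage : g '' A ⊆ {x | τ ≤ cdfFun P (fun ω ↦ g (Z ω)) x} := by
      rintro _ ⟨x, hx, rfl⟩
      rwa [Set.mem_ofPred_eq, cdfFun_comp_of_strictMono P Z hg]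
    calc sInf {x | τ ≤ cdfFun P (fun ω ↦ g (Z ω)) x}
        ≤ sInf (g '' A) :=
          csInf_le_csInf (bddBelow_quantile_set P (hgc.measurable.comp hZ) hτ.1)
            (hne.image g) himage
      _ = g (sInf A) := (hg.monotone.map_csInf_of_continuousAt hgc.continuousAt hne hbdd).symm
  · refine le_csInf (nonempty_quantile_set P (hgc.measurable.comp hZ) hτ.2) fun x hx ↦ ?_
    by_contra! hlt
    -- by continuity, some `v < sInf A` still has `x < g v`, and then `v ∈ A`
    have hnear : ∀ᶠ v in 𝓝[<] sInf A, x < g v :=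
      nhdsWithin_le_nhds ((hgc.tendsto _).eventually (eventually_gt_nhds hlt))
    obtain ⟨v, hxv, hvA⟩ := (hnear.and self_mem_nhdsWithin).exists
    have hsub : {ω | g (Z ω) ≤ x} ⊆ {ω | Z ω ≤ v} := fun ω hω ↦
      (hg.lt_iff_lt.mp ((Set.mem_ofPred_eq ▸ hω).trans_lt hxv)).le
    exact notMem_of_lt_csInf hvA hbdd
      (hx.trans (ENNReal.toReal_mono (measure_ne_top _ _) (measure_mono hsub)))

end ProbabilisticCiC

open ProbabilisticCiC in
/- Time periods are encoded by `Bool` (`false` = period 0, `true` = period 1).  The group-level quantiles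
are the random variables `Y_{I0}(τ_U) = h (Q_U τ_U) V_I false`,
`Y_{Nt}(τ_U) = h (Q_U τ_U) V_N t`, and the counterfactual is
`Y^N_{I1}(τ_U) = h (Q_U τ_U) V_I true`. -/
theorem probabilistic_cic_theorem_one_part_i_general
    {Ω : Type*} [MeasurableSpace Ω] (P : Measure Ω) [IsProbabilityMeasure P]
    (VI VN : Ω → ℝ) (hVI : Measurable VI) (hVN : Measurable VN)
    (hFVN_mono : StrictMono fun x : ℝ => (P {ω | VN ω ≤ x}).toReal)
    (h : ℝ → ℝ → Bool → ℝ)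
    (hmono_v : ∀ t u, StrictMono fun v => h u v t)
    (hcont_v : ∀ t u, Continuous fun v => h u v t)
    (QU : ℝ → ℝ) :
    ∀ τUstar ∈ Set.Ioo (0:ℝ) 1, ∀ τVstar ∈ Set.Ioo (0:ℝ) 1,
      ∀ τU ∈ Set.Ioo (0:ℝ) 1,
        quantileFun P (fun ω => h (QU τUstar) (VI ω) true) τVstar
          = quantileFun P (fun ω => h (QU τUstar) (VN ω) true)
              (cdfFun P (fun ω => h (QU τU) (VN ω) false)
                (quantileFun P (fun ω => h (QU τU) (VI ω) false) τVstar)) := by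
  rintro τUstar - τVstar hτV τU -
  have hF : StrictMono (cdfFun P VN) := hFVN_mono
  rw [quantileFun_comp_of_strictMono P hVI (hmono_v true _) (hcont_v true _) hτV,
    quantileFun_comp_of_strictMono P hVI (hmono_v false _) (hcont_v false _) hτV,
    cdfFun_comp_of_strictMono P VN (hmono_v false _),
    quantileFun_comp_of_strictMono P hVN (hmono_v true _) (hcont_v true _)
      (cdfFun_mem_Ioo_of_strictMono P hF _),
    quantileFun_cdfFun_of_strictMono P hF]

theorem probabilistic_cic_theorem_one_part_i
    {Ω : Type*} [MeasurableSpace Ω] (P : Measure Ω) [IsProbabilityMeasure P]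
    (VI VN : Ω → ℝ) (hVI : Measurable VI) (hVN : Measurable VN)
    (hFVN_cont : Continuous fun x : ℝ => (P {ω | VN ω ≤ x}).toReal)
    (hFVN_mono : StrictMono fun x : ℝ => (P {ω | VN ω ≤ x}).toReal)
    (h : ℝ → ℝ → Bool → ℝ)
    (hmono_u : ∀ t v, StrictMono fun u => h u v t)
    (hmono_v : ∀ t u, StrictMono fun v => h u v t)
    (hcont_v : ∀ t u, Continuous fun v => h u v t)
    (QU : ℝ → ℝ) :
    ∀ τUstar ∈ Set.Ioo (0:ℝ) 1, ∀ τVstar ∈ Set.Ioo (0:ℝ) 1,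
      ∀ τU ∈ Set.Ioo (0:ℝ) 1,
        quantileFun P (fun ω => h (QU τUstar) (VI ω) true) τVstar
          = quantileFun P (fun ω => h (QU τUstar) (VN ω) true)
              (cdfFun P (fun ω => h (QU τU) (VN ω) false)
                (quantileFun P (fun ω => h (QU τU) (VI ω) false) τVstar)) :=
  probabilistic_cic_theorem_one_part_i_general P VI VN hVI hVN hFVN_mono h hmono_v hcont_v QU
end
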